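/- Let ω0, ω1 be positive functionals on a unital C*-algebra A with representations (π0, ψ0, K0) and (π1, ψ1, K1) respectively, and let s ∈ [0,1]. Then there exist a complex Hilbert space K, a *-homomorphism π : A → B(K), and vectors φ, φ' ∈ K such that φ represents ω0, φ' represents the convex mixture (1−s)·ω0 + s·ω1, and ‖φ − φ'‖ ≤ √s · ( sqrt(ω0(1)) + sqrt(ω1(1)) ). -/

import Mathlib

noncomputable section

universe u v w

open scoped ComplexOrder

/-- A positive (continuous linear) functional on a C*-algebra:
`ω (a⋆ a) ≥ 0` for every `a`. -/
def IsPositiveFunctional {A : Type*} [CStarAlgebra A] (ω : A →L[ℂ] ℂ) : Prop :=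
  ∀ a : A, 0 ≤ ω (star a * a)

/-- `(π, ψ, K)` is a representation of the functional `ω`: `ω a = ⟨ψ, π a ψ⟩` for all `a`. -/
def IsRepn {A : Type*} [CStarAlgebra A]
    {K : Type*} [NormedAddCommGroup K] [InnerProductSpace ℂ K] [CompleteSpace K]
    (ω : A →L[ℂ] ℂ) (π : A →⋆ₙₐ[ℂ] (K →L[ℂ] K)) (ψ : K) : Prop :=
  ∀ a : A, ω a = (inner ℂ ψ (π a ψ) : ℂ)

/-! Replace `ψᵢ` by `φᵢ = πᵢ 1 ψᵢ`: it still represents `ωᵢ`, and `‖φᵢ‖ = √(ωᵢ 1)`, which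
`ψᵢ` itself need not satisfy since `πᵢ` need not be unital. In the direct sum `π₀ ⊕ π₁`
the vector `(φ₀, 0)` represents `ω₀` and `(√(1-s) φ₀, √s φ₁)` represents the mixture; their
distance is at most `(1 - √(1-s)) ‖φ₀‖ + √s ‖φ₁‖ ≤ √s (‖φ₀‖ + ‖φ₁‖)`, because
`1 ≤ √(1-s) + √s`. -/

namespace WithLp

theorem prod_norm_le_fst_add_snd {α β : Type*} [SeminormedAddCommGroup α]
    [SeminormedAddCommGroup β] (x : WithLp 2 (α × β)) : ‖x‖ ≤ ‖x.fst‖ + ‖x.snd‖ := by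
  rw [prod_norm_eq_of_L2, Real.sqrt_le_left (by positivity)]
  nlinarith [norm_nonneg x.fst, norm_nonneg x.snd]

end WithLp

theorem abs_one_sub_sqrt_one_sub_le_sqrt {s : ℝ} (hs0 : 0 ≤ s) (hs1 : s ≤ 1) :
    |1 - √(1 - s)| ≤ √s := by
  have hc : √(1 - s) ^ 2 = 1 - s := Real.sq_sqrt (by linarith)
  have hd : √s ^ 2 = s := Real.sq_sqrt hs0
  rw [abs_le]
  constructor <;> nlinarith [Real.sqrt_nonneg (1 - s), Real.sqrt_nonneg s,
    mul_nonneg (Real.sqrt_nonneg (1 - s)) (Real.sqrt_nonneg s)]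

theorem map_mul_apply {A K F : Type*} [Mul A] [NormedAddCommGroup K] [NormedSpace ℂ K]
    [FunLike F A (K →L[ℂ] K)] [MulHomClass F A (K →L[ℂ] K)] (π : F) (a b : A) (x : K) :
    π a (π b x) = π (a * b) x := by
  rw [map_mul]; rfl

section Representation

variable {A : Type*} [NonUnitalNonAssocSemiring A] [Module ℂ A] [Star A]
    {K₀ : Type*} [NormedAddCommGroup K₀] [InnerProductSpace ℂ K₀] [CompleteSpace K₀]
    {K₁ : Type*} [NormedAddCommGroup K₁] [InnerProductSpace ℂ K₁] [CompleteSpace K₁]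

def prodRepn (π₀ : A →⋆ₙₐ[ℂ] (K₀ →L[ℂ] K₀)) (π₁ : A →⋆ₙₐ[ℂ] (K₁ →L[ℂ] K₁)) :
    A →⋆ₙₐ[ℂ] (WithLp 2 (K₀ × K₁) →L[ℂ] WithLp 2 (K₀ × K₁)) where
  toFun a :=
    ((WithLp.prodContinuousLinearEquiv 2 ℂ K₀ K₁).symm : K₀ × K₁ →L[ℂ] WithLp 2 (K₀ × K₁)) ∘L
      ((π₀ a).prodMap (π₁ a)) ∘L
      ((WithLp.prodContinuousLinearEquiv 2 ℂ K₀ K₁) : WithLp 2 (K₀ × K₁) →L[ℂ] K₀ × K₁)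
  map_smul' c a := by ext x; refine WithLp.ofLp_injective 2 (Prod.ext ?_ ?_) <;> simp
  map_zero' := by ext x; refine WithLp.ofLp_injective 2 (Prod.ext ?_ ?_) <;> simp
  map_add' a b := by ext x; refine WithLp.ofLp_injective 2 (Prod.ext ?_ ?_) <;> simp
  map_mul' a b := by ext x; refine WithLp.ofLp_injective 2 (Prod.ext ?_ ?_) <;> simp
  map_star' a := by
    rw [ContinuousLinearMap.star_eq_adjoint, ContinuousLinearMap.eq_adjoint_iff]
    intro x y
    simp [WithLp.prod_inner_apply, map_star, ContinuousLinearMap.star_eq_adjoint,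
      ContinuousLinearMap.adjoint_inner_left]

@[simp]
theorem prodRepn_apply (π₀ : A →⋆ₙₐ[ℂ] (K₀ →L[ℂ] K₀)) (π₁ : A →⋆ₙₐ[ℂ] (K₁ →L[ℂ] K₁))
    (a : A) (x : WithLp 2 (K₀ × K₁)) :
    prodRepn π₀ π₁ a x = WithLp.toLp 2 (π₀ a x.fst, π₁ a x.snd) := rfl

end Representation

namespace IsRepn

variable {A : Type*} [CStarAlgebra A]
    {K : Type*} [NormedAddCommGroup K] [InnerProductSpace ℂ K] [CompleteSpace K]
    {K₀ : Type*} [NormedAddCommGroup K₀] [InnerProductSpace ℂ K₀] [CompleteSpace K₀]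
    {K₁ : Type*} [NormedAddCommGroup K₁] [InnerProductSpace ℂ K₁] [CompleteSpace K₁]
    {ω ω₀ ω₁ : A →L[ℂ] ℂ} {π : A →⋆ₙₐ[ℂ] (K →L[ℂ] K)} {ψ : K}

theorem zero (π : A →⋆ₙₐ[ℂ] (K →L[ℂ] K)) : IsRepn 0 π 0 := by
  simp [IsRepn]

theorem ofReal_smul (h : IsRepn ω π ψ) (c : ℝ) :
    IsRepn (((c ^ 2 : ℝ) : ℂ) • ω) π ((c : ℂ) • ψ) := by
  intro a
  simp [h a, mul_assoc, sq]

theorem prodRepn {π₀ : A →⋆ₙₐ[ℂ] (K₀ →L[ℂ] K₀)} {π₁ : A →⋆ₙₐ[ℂ] (K₁ →L[ℂ] K₁)} {ψ₀ : K₀}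
    {ψ₁ : K₁} (h₀ : IsRepn ω₀ π₀ ψ₀) (h₁ : IsRepn ω₁ π₁ ψ₁) :
    IsRepn (ω₀ + ω₁) (_root_.prodRepn π₀ π₁) (WithLp.toLp 2 (ψ₀, ψ₁)) := by
  intro a
  simp [WithLp.prod_inner_apply, h₀ a, h₁ a]

theorem map_one_apply (h : IsRepn ω π ψ) : IsRepn ω π (π 1 ψ) := by
  intro a
  rw [((IsSelfAdjoint.one A).map π).isSymmetric.apply_clm, map_mul_apply, map_mul_apply, mul_one,
    one_mul, h a]

theorem norm_map_one_apply (h : IsRepn ω π ψ) : ‖π 1 ψ‖ = √(ω 1).re := by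
  rw [norm_eq_sqrt_re_inner (𝕜 := ℂ), h.map_one_apply 1, map_mul_apply, one_mul]
  rfl

end IsRepn

theorem norm_toLp_sub_toLp_smul_le {K₀ K₁ : Type*} [SeminormedAddCommGroup K₀]
    [NormedSpace ℂ K₀] [SeminormedAddCommGroup K₁] [NormedSpace ℂ K₁] {c d : ℝ} (hcd : |1 - c| ≤ d)
    (x : K₀) (y : K₁) :
    ‖WithLp.toLp 2 (x, 0) - WithLp.toLp 2 ((c : ℂ) • x, (d : ℂ) • y)‖ ≤ d * (‖x‖ + ‖y‖) := by
  have hd : 0 ≤ d := (abs_nonneg _).trans hcd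
  calc _ ≤ ‖((1 - c : ℝ) : ℂ) • x‖ + ‖(d : ℂ) • y‖ := by
        rw [← WithLp.toLp_sub, Prod.mk_sub_mk, zero_sub, ← norm_neg ((d : ℂ) • y),
          Complex.ofReal_sub, Complex.ofReal_one, sub_smul, one_smul]
        exact WithLp.prod_norm_le_fst_add_snd _
    _ = |1 - c| * ‖x‖ + d * ‖y‖ := by
        rw [norm_smul, norm_smul, Complex.norm_real, Complex.norm_real, Real.norm_eq_abs,
          Real.norm_of_nonneg hd]
    _ ≤ d * (‖x‖ + ‖y‖) := by nlinarith [norm_nonneg x]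

theorem stmt18_general {A : Type u} [CStarAlgebra A]
    {K₀ : Type v} [NormedAddCommGroup K₀] [InnerProductSpace ℂ K₀] [CompleteSpace K₀]
    {K₁ : Type w} [NormedAddCommGroup K₁] [InnerProductSpace ℂ K₁] [CompleteSpace K₁]
    (ω₀ ω₁ : A →L[ℂ] ℂ)
    (π₀ : A →⋆ₙₐ[ℂ] (K₀ →L[ℂ] K₀)) (ψ₀ : K₀) (hrep₀ : IsRepn ω₀ π₀ ψ₀)
    (π₁ : A →⋆ₙₐ[ℂ] (K₁ →L[ℂ] K₁)) (ψ₁ : K₁) (hrep₁ : IsRepn ω₁ π₁ ψ₁)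
    (s : ℝ) (hs0 : 0 ≤ s) (hs1 : s ≤ 1) :
    ∃ (K : Type (max v w)) (_ : NormedAddCommGroup K) (_ : InnerProductSpace ℂ K)
      (_ : CompleteSpace K) (π : A →⋆ₙₐ[ℂ] (K →L[ℂ] K)) (φ φ' : K),
      -- `φ` represents `ω₀`
      IsRepn ω₀ π φ ∧
      -- `φ'` represents the convex mixture `(1-s)·ω₀ + s·ω₁`
      IsRepn (((1 - s : ℝ) : ℂ) • ω₀ + ((s : ℝ) : ℂ) • ω₁) π φ' ∧
      ‖φ - φ'‖ ≤ Real.sqrt s * (Real.sqrt ((ω₀ 1).re) + Real.sqrt ((ω₁ 1).re)) := by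
  set φ₀ := π₀ 1 ψ₀
  set φ₁ := π₁ 1 ψ₁
  refine ⟨WithLp 2 (K₀ × K₁), inferInstance, inferInstance, inferInstance, prodRepn π₀ π₁,
    WithLp.toLp 2 (φ₀, 0), WithLp.toLp 2 ((√(1 - s) : ℂ) • φ₀, (√s : ℂ) • φ₁), ?_, ?_, ?_⟩
  · simpa using hrep₀.map_one_apply.prodRepn (IsRepn.zero π₁)
  · have h := (hrep₀.map_one_apply.ofReal_smul √(1 - s)).prodRepn
      (hrep₁.map_one_apply.ofReal_smul √s)
    rwa [Real.sq_sqrt (by linarith), Real.sq_sqrt hs0] at h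
  · rw [← hrep₀.norm_map_one_apply, ← hrep₁.norm_map_one_apply]
    exact norm_toLp_sub_toLp_smul_le (abs_one_sub_sqrt_one_sub_le_sqrt hs0 hs1) φ₀ φ₁

theorem stmt18 {A : Type u} [CStarAlgebra A]
    {K₀ : Type v} [NormedAddCommGroup K₀] [InnerProductSpace ℂ K₀] [CompleteSpace K₀]
    {K₁ : Type w} [NormedAddCommGroup K₁] [InnerProductSpace ℂ K₁] [CompleteSpace K₁]
    (ω₀ ω₁ : A →L[ℂ] ℂ) (hω₀ : IsPositiveFunctional ω₀) (hω₁ : IsPositiveFunctional ω₁)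
    (π₀ : A →⋆ₙₐ[ℂ] (K₀ →L[ℂ] K₀)) (ψ₀ : K₀) (hrep₀ : IsRepn ω₀ π₀ ψ₀)
    (π₁ : A →⋆ₙₐ[ℂ] (K₁ →L[ℂ] K₁)) (ψ₁ : K₁) (hrep₁ : IsRepn ω₁ π₁ ψ₁)
    (s : ℝ) (hs0 : 0 ≤ s) (hs1 : s ≤ 1) :
    ∃ (K : Type (max v w)) (_ : NormedAddCommGroup K) (_ : InnerProductSpace ℂ K)
      (_ : CompleteSpace K) (π : A →⋆ₙₐ[ℂ] (K →L[ℂ] K)) (φ φ' : K),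
      -- `φ` represents `ω₀`
      IsRepn ω₀ π φ ∧
      -- `φ'` represents the convex mixture `(1-s)·ω₀ + s·ω₁`
      IsRepn (((1 - s : ℝ) : ℂ) • ω₀ + ((s : ℝ) : ℂ) • ω₁) π φ' ∧
      ‖φ - φ'‖ ≤ Real.sqrt s * (Real.sqrt ((ω₀ 1).re) + Real.sqrt ((ω₁ 1).re)) :=
  stmt18_general ω₀ ω₁ π₀ ψ₀ hrep₀ π₁ ψ₁ hrep₁ s hs0 hs1
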